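/- arXiv:2008.03909 — 6 statements merged into one kernel-verified Lean document; each statement's English description precedes it below -/
import Mathlib

section
/- Let G be an undirected graph on vertex set V and let C : V → V be a labeling such that C(u) = C(v) implies u and v are in the same connected component of G, and such that every vertex v satisfies either C(v) = v, or C(v) = r with C(r) = r (height-one trees). If C' is a correct connectivity labeling of the contracted graph G[C] (whose vertices are labels and whose edges are pairs (C(u), C(v)) for edges (u,v) of G with C(u) ≠ C(v)), then the composed labeling C''(v) = C'(C(v)) is a correct connectivity labeling of G: C''(u) = C''(v) if and only if u and v lie in the same connected component of G. -/
/-- The contracted graph `G[C]`: vertices are labels, with an edge between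
labels `a ≠ b` whenever some edge `(u,v)` of `G` has `C u = a` and `C v = b`. -/
def contractedGraph {V : Type*} (G : SimpleGraph V) (C : V → V) : SimpleGraph V where
  Adj a b := a ≠ b ∧ ∃ u v, G.Adj u v ∧ C u = a ∧ C v = b
  symm := by
    constructor
    rintro a b ⟨hab, u, v, huv, hu, hv⟩
    exact ⟨hab.symm, v, u, huv.symm, hv, hu⟩
  loopless := by
    constructor
    rintro a ⟨hab, -⟩
    exact hab rfl

/-! A path of `G` maps under `C` to a path of `G[C]`, edges inside one label class collapsing.
Conversely a path of `G[C]` lifts to `G`: each of its edges comes from an edge of `G`, and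
consecutive lifted edges are joined inside a label class, which is connected in `G` because
`C` is a partial connectivity labeling. -/

section Contraction

variable {V : Type*} {G : SimpleGraph V} {C : V → V}

lemma reachable_contractedGraph {u v : V} (h : G.Reachable u v) :
    (contractedGraph G C).Reachable (C u) (C v) := by
  obtain ⟨w⟩ := h
  induction w with
  | nil => rfl
  | @cons x y _ hxy _ ih =>
    by_cases hC : C x = C y
    · exact hC ▸ ih
    · have hadj : (contractedGraph G C).Adj (C x) (C y) := ⟨hC, x, y, hxy, rfl, rfl⟩
      exact hadj.reachable.trans ih

lemma reachable_of_reachable_contractedGraph (hC : ∀ u v, C u = C v → G.Reachable u v)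
    {a b : V} (h : (contractedGraph G C).Reachable a b) :
    ∀ u v, C u = a → C v = b → G.Reachable u v := by
  obtain ⟨w⟩ := h
  induction w with
  | nil => exact fun u v hu hv => hC u v (hu.trans hv.symm)
  | cons hadj _ ih =>
    obtain ⟨-, s, t, hst, hs, ht⟩ := hadj
    exact fun u v hu hv => (hC u s (hu.trans hs.symm)).trans (hst.reachable.trans (ih t v ht hv))

lemma reachable_contractedGraph_iff (hC : ∀ u v, C u = C v → G.Reachable u v) {u v : V} :
    (contractedGraph G C).Reachable (C u) (C v) ↔ G.Reachable u v :=
  ⟨fun h => reachable_of_reachable_contractedGraph hC h u v rfl rfl, reachable_contractedGraph⟩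

end Contraction

theorem composed_labeling_correct_general {V : Type*} (G : SimpleGraph V) (C C' : V → V)
    (hpartial : ∀ u v, C u = C v → G.Reachable u v)
    (hC' : ∀ a b, C' a = C' b ↔ (contractedGraph G C).Reachable a b) :
    ∀ u v, C' (C u) = C' (C v) ↔ G.Reachable u v :=
  fun u v => (hC' (C u) (C v)).trans (reachable_contractedGraph_iff hpartial)

/-- If `C` is a height-one partial connectivity labeling of `G` and `C'` is a
correct connectivity labeling of the contracted graph `G[C]`, then the composed
labeling `v ↦ C' (C v)` is a correct connectivity labeling of `G`. -/
theorem composed_labeling_correct {V : Type*} (G : SimpleGraph V) (C C' : V → V)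
    (hpartial : ∀ u v, C u = C v → G.Reachable u v)
    (hheight : ∀ v, C (C v) = C v)
    (hC' : ∀ a b, C' a = C' b ↔ (contractedGraph G C).Reachable a b) :
    ∀ u v, C' (C u) = C' (C v) ↔ G.Reachable u v :=
  composed_labeling_correct_general G C C' hpartial hC'
end

section
/- Let G = (V, E) be an undirected graph. Starting from the identity parent function P₀(v) = v, apply any finite sequence of operations each of which either (a) merges two trees by linking the root of the tree containing u to a vertex in the tree containing v for some edge (u,v) ∈ E, or (b) performs path compression, i.e., changes P(w) from its current value to any vertex on the path from w to its root (strictly preserving roots of all trees and the partition into trees). If at the end, for every edge (u,v) ∈ E the roots of u and v coincide, then the final root function is a correct connectivity labeling of G: root(u) = root(v) iff u and v are in the same connected component. -/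
/-!
A label function `f : V → W` is *sound* for `G` when equal labels only occur on vertices of the
same component. The identity labeling is sound, path compression does not change which labels
agree, and a merge along an edge `(u, v)` only identifies the classes of `u` and `v`, which lie in
one component; so soundness holds after every operation. Conversely, once every edge has equal
labels at both ends, labels are constant along walks.
-/

namespace SimpleGraph

variable {V W : Type*} {G : SimpleGraph V}

theorem Reachable.eq_of_forall_adj_eq {f : V → W} (hf : ∀ a b, G.Adj a b → f a = f b)
    {u v : V} (h : G.Reachable u v) : f u = f v := by
  obtain ⟨p⟩ := h
  induction p with
  | nil => rfl
  | cons hadj _ ih => exact (hf _ _ hadj).trans ih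

theorem reachable_of_eq_of_merge {f g : V → W} {u v : V} (huv : G.Adj u v)
    (hg : ∀ a b, g a = g b ↔
      (f a = f b ∨ (f a = f u ∧ f b = f v) ∨ (f a = f v ∧ f b = f u)))
    (hf : ∀ a b, f a = f b → G.Reachable a b) :
    ∀ a b, g a = g b → G.Reachable a b := by
  intro a b hab
  rcases (hg a b).mp hab with h | ⟨hau, hbv⟩ | ⟨hav, hbu⟩
  · exact hf a b h
  · exact ((hf a u hau).trans huv.reachable).trans (hf b v hbv).symm
  · exact ((hf a v hav).trans huv.symm.reachable).trans (hf b u hbu).symm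

end SimpleGraph

/-- Starting from the identity labeling, apply a finite sequence of operations,
each of which either (a) merges the trees of the two endpoints of some edge of
`G` (leaving all other trees unchanged), or (b) performs path compression,
which preserves the partition into trees. Here `R t` denotes the root function
after `t` operations. If at the end every edge of `G` has both endpoints with
the same root, then the final root function is a correct connectivity labeling
of `G`. -/
theorem union_find_final_labeling_correct {V : Type*} (G : SimpleGraph V)
    (T : ℕ) (R : ℕ → V → V)
    (h0 : R 0 = id)
    (hstep : ∀ t < T,
      (∃ u v, G.Adj u v ∧ ∀ a b, R (t+1) a = R (t+1) b ↔
        (R t a = R t b ∨ (R t a = R t u ∧ R t b = R t v) ∨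
          (R t a = R t v ∧ R t b = R t u))) ∨
      (∀ a b, R (t+1) a = R (t+1) b ↔ R t a = R t b))
    (hfin : ∀ u v, G.Adj u v → R T u = R T v) :
    ∀ u v, R T u = R T v ↔ G.Reachable u v := by
  have sound : ∀ t ≤ T, ∀ a b, R t a = R t b → G.Reachable a b := by
    intro t
    induction t with
    | zero =>
      intro _ a b hab
      obtain rfl : a = b := by rwa [h0] at hab
      exact SimpleGraph.Reachable.refl a
    | succ t ih =>
      intro (ht : t < T)
      rcases hstep t ht with ⟨u, v, huv, hmerge⟩ | hcompress
      · exact SimpleGraph.reachable_of_eq_of_merge huv hmerge (ih ht.le)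
      · exact fun a b hab => ih ht.le a b ((hcompress a b).mp hab)
  exact fun u v => ⟨sound T le_rfl u v, SimpleGraph.Reachable.eq_of_forall_adj_eq hfin⟩
end

section
/- Let T be a rooted tree on vertex set V given by a parent function P (with P(r) = r for the root r and every vertex reaching r by iterating P). Let u ∈ V be a non-root vertex with path u = w₀, w₁, ..., w_k = r to the root. Define the path-halving operation: for i = 0, 2, 4, ..., set P'(w_i) = P(P(w_i)), leaving all other parent values unchanged. Then P' is still an acyclic parent function with the same root r for every vertex, the tree-partition is unchanged, and the path from u to r under P' has length ⌈k/2⌉. -/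
/-!
Every step of `P'` advances one or two steps of `P`, and the root is fixed by `P`, so `P'`
reaches the root no later than `P` does. Along the root-path of `u` every step of `P'` starts
from an even-indexed vertex and jumps two steps ahead, so `P'^[m] u = P^[2m] u` until the
root is reached.
-/

namespace Function

variable {α : Type*}

theorem iterate_eq_of_forall_eq_or_eq_iterate_two {P Q : α → α} {r : α} (hr : P r = r)
    (hQ : ∀ v, Q v = P v ∨ Q v = P (P v)) {n : ℕ} {v : α} (h : P^[n] v = r) :
    Q^[n] v = r := by
  induction n generalizing v with
  | zero => exact h
  | succ n ih =>
    rw [iterate_succ_apply] at h ⊢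
    apply ih
    rcases hQ v with hv | hv
    · rwa [hv]
    · rw [hv, (Commute.iterate_self P n).eq, h, hr]

theorem iterate_eq_iterate_two_mul {P Q : α → α} {u : α} {m : ℕ}
    (h : ∀ i < m, Q (P^[2 * i] u) = P (P (P^[2 * i] u))) :
    Q^[m] u = P^[2 * m] u := by
  induction m with
  | zero => rfl
  | succ m ih =>
    rw [iterate_succ_apply', ih fun i hi => h i (by omega), h m (by omega),
      Nat.mul_succ, iterate_succ_apply', iterate_succ_apply']

end Function

open Function in
theorem path_halving_correct_general {V : Type*} (P P' : V → V) (r : V)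
    (hr : P r = r)
    (hall : ∀ v, ∃ n, P^[n] v = r)
    (u : V) (k : ℕ)
    (hk : P^[k] u = r) (hkmin : ∀ i < k, P^[i] u ≠ r)
    (hP'even : ∀ x, (∃ i, Even i ∧ i < k ∧ x = P^[i] u) → P' x = P (P x))
    (hP'other : ∀ x, ¬ (∃ i, Even i ∧ i < k ∧ x = P^[i] u) → P' x = P x) :
    (P' r = r) ∧ (∀ v, ∃ n, P'^[n] v = r) ∧
    (P'^[(k + 1) / 2] u = r ∧ ∀ m < (k + 1) / 2, P'^[m] u ≠ r) := by
  have hstep : ∀ v, P' v = P v ∨ P' v = P (P v) := fun v => by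
    by_cases h : ∃ i, Even i ∧ i < k ∧ v = P^[i] u
    exacts [Or.inr (hP'even v h), Or.inl (hP'other v h)]
  have hroot : P' r = r := by
    rw [hP'other r, hr]
    rintro ⟨i, -, hik, hir⟩
    exact hkmin i hik hir.symm
  have halving : ∀ m ≤ (k + 1) / 2, P'^[m] u = P^[2 * m] u := fun m hm =>
    iterate_eq_iterate_two_mul fun i hi =>
      hP'even _ ⟨2 * i, even_two_mul i, by omega, rfl⟩
  refine ⟨hroot, fun v => (hall v).imp fun n =>
    iterate_eq_of_forall_eq_or_eq_iterate_two hr hstep, ?_, fun m hm => ?_⟩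
  · rw [halving _ le_rfl, show 2 * ((k + 1) / 2) = 2 * ((k + 1) / 2) - k + k by omega,
      iterate_add_apply, hk, iterate_fixed hr]
  · rw [halving m hm.le]
    exact hkmin (2 * m) (by omega)

/-- Path halving.  Let `P` be a parent function of a rooted tree with root `r`
(`P r = r` and every vertex reaches `r` by iterating `P`), and let `u ≠ r` have
root-path `u = P^[0] u, P^[1] u, …, P^[k] u = r` (of length `k`, i.e. no
earlier iterate is `r`).  Let `P'` set the parent of every even-indexed vertex
on this path to its grandparent, leaving all other parents unchanged.  Then
`P'` is still an acyclic parent function with root `r` for every vertex, and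
the path from `u` to `r` under `P'` has length `⌈k/2⌉`. -/
theorem path_halving_correct {V : Type*} (P P' : V → V) (r : V)
    (hr : P r = r)
    (hall : ∀ v, ∃ n, P^[n] v = r)
    (u : V) (hu : u ≠ r) (k : ℕ)
    (hk : P^[k] u = r) (hkmin : ∀ i < k, P^[i] u ≠ r)
    (hP'even : ∀ x, (∃ i, Even i ∧ i < k ∧ x = P^[i] u) → P' x = P (P x))
    (hP'other : ∀ x, ¬ (∃ i, Even i ∧ i < k ∧ x = P^[i] u) → P' x = P x) :
    (P' r = r) ∧ (∀ v, ∃ n, P'^[n] v = r) ∧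
    (P'^[(k + 1) / 2] u = r ∧ ∀ m < (k + 1) / 2, P'^[m] u ≠ r) :=
  path_halving_correct_general P P' r hr hall u k hk hkmin hP'even hP'other
end

section
/- Let G = (V, E) be an undirected graph and let C be the labeling produced by contracting a single connected subgraph K of G to its minimum-ID vertex m = min K, while every vertex outside K is labeled by its own ID; assume m is strictly smaller than the ID of every vertex not in K. Then in any min-based label update process on G (where a vertex's label may only decrease, and each update propagates a label across an edge or along a parent pointer), no vertex of K ever changes its label, and hence edges directed out of vertices in K need never be processed for the algorithm to compute a correct connectivity labeling, provided edges into K are still processed from their other endpoint. -/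
/-! `m` is the least of all initial labels and every label is a copy of an earlier one, so no
label ever drops below `m`; the labels on `K` start at `m` and never increase. -/

theorem le_of_le_initial_of_copied {V α : Type*} [Preorder α] (L : ℕ → V → α) {b : α}
    (h0 : ∀ v, b ≤ L 0 v) (hcopy : ∀ t v, ∃ w, L (t + 1) v = L t w) :
    ∀ t v, b ≤ L t v := by
  intro t
  induction t with
  | zero => exact h0
  | succ t ih =>
    intro v
    obtain ⟨w, hw⟩ := hcopy t v
    exact hw ▸ ih w

open scoped Classical in
theorem contracted_component_labels_stable_general {V : Type*} [LinearOrder V]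
    (G : SimpleGraph V) (K : Set V)
    (m : V) (hmin : ∀ v, v ∉ K → m < v)
    (L : ℕ → V → V)
    (h0 : ∀ v, L 0 v = if v ∈ K then m else v)
    (hprop : ∀ t v, ∃ w, G.Reachable w v ∧ L (t+1) v = L t w)
    (hmono : ∀ t v, L (t+1) v ≤ L t v) :
    ∀ t, ∀ v ∈ K, L t v = m := by
  have hinit : ∀ v, m ≤ L 0 v := fun v => by
    rw [h0]
    split_ifs with hv
    exacts [le_rfl, (hmin v hv).le]
  have hlow := le_of_le_initial_of_copied L hinit fun t v =>
    (hprop t v).imp fun _ => And.right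
  intro t v hv
  refine le_antisymm ?_ (hlow t v)
  calc L t v ≤ L 0 v := antitone_nat_of_succ_le (f := (L · v)) (fun s => hmono s v) t.zero_le
    _ = m := by rw [h0, if_pos hv]

open scoped Classical in
/-- Contract a connected subgraph `K` of `G` to its minimum-ID vertex `m`
(with `m` strictly smaller than the ID of every vertex not in `K`), labeling
every other vertex by its own ID.  In any min-based label update process
(labels only decrease, and each new label originates from the label of some
vertex in the same connected component), no vertex of `K` ever changes its
label. -/
theorem contracted_component_labels_stable {V : Type*} [LinearOrder V]
    (G : SimpleGraph V) (K : Set V)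
    (hKconn : (G.induce K).Connected)
    (m : V) (hm : m ∈ K) (hmin : ∀ v, v ∉ K → m < v)
    (L : ℕ → V → V)
    (h0 : ∀ v, L 0 v = if v ∈ K then m else v)
    (hprop : ∀ t v, ∃ w, G.Reachable w v ∧ L (t+1) v = L t w)
    (hmono : ∀ t v, L (t+1) v ≤ L t v) :
    ∀ t, ∀ v ∈ K, L t v = m :=
  contracted_component_labels_stable_general G K m hmin L h0 hprop hmono
end

section
/- Let G = (V, E) be a weighted undirected graph with positive weights, fix ε > 0, and let W_min be the minimum edge weight. Partition E into buckets B₀, B₁, ..., where Bᵢ = { e : W_min(1+ε)^i ≤ w(e) < W_min(1+ε)^{i+1} }. Consider the algorithm that processes buckets in increasing order, and for each bucket computes a spanning forest of the edges of the bucket that are not self-loops with respect to the connectivity of previously selected edges, adding those forest edges to F. Then the final F is a spanning forest of G, and its total weight satisfies W(F_OPT) ≤ W(F) ≤ (1+ε)·W(F_OPT), where F_OPT is a minimum-weight spanning forest of G. -/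
/-
Rounding every weight down to `Wmin * (1 + ε) ^ bucket e` changes it by a factor of at most
`1 + ε`, and for the rounded weights the bucketed greedy algorithm is Kruskal's algorithm, hence
exact. Kruskal's optimality is a counting argument: an acyclic edge set has `|V| - c` edges, `c`
its number of components, so among the edges of buckets `≤ i` (which the greedy forest restricted
to those buckets spans) no forest has more edges than the greedy one. Summation by parts turns
these threshold counts into the comparison of total rounded weights.
-/

/- Greedy forest construction: process the listed edges in order, adding an
edge to the current forest unless its endpoints are already connected
(i.e. the edge is a self-loop with respect to the current connectivity). -/
open Classical in
noncomputable def greedyForest {V : Type*} [DecidableEq V] :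
    Finset (Sym2 V) → List (V × V) → Finset (Sym2 V)
  | F, [] => F
  | F, e :: l =>
    if (SimpleGraph.fromEdgeSet (↑F : Set (Sym2 V))).Reachable e.1 e.2 then
      greedyForest F l
    else
      greedyForest (insert s(e.1, e.2) F) l

/-- `F` is a spanning forest of `G`: a set of edges of `G` that is acyclic and
whose connectivity coincides with that of `G`. -/
def IsSpanningForest {V : Type*} (G : SimpleGraph V) (F : Finset (Sym2 V)) : Prop :=
  (↑F : Set (Sym2 V)) ⊆ G.edgeSet ∧
  (SimpleGraph.fromEdgeSet (↑F : Set (Sym2 V))).IsAcyclic ∧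
  ∀ u v, (SimpleGraph.fromEdgeSet (↑F : Set (Sym2 V))).Reachable u v ↔ G.Reachable u v

namespace SimpleGraph
variable {V : Type*} {G : SimpleGraph V} {a b u v : V}

lemma reachable_sup_edge : (G ⊔ edge a b).Reachable a b := by
  by_cases hab : a = b
  · exact hab ▸ .rfl
  · exact Adj.reachable (by simp [edge_adj, hab])

lemma reachable_sup_edge_iff :
    (G ⊔ edge a b).Reachable u v ↔ G.Reachable u v ∨
      (G.Reachable u a ∧ G.Reachable b v) ∨ (G.Reachable u b ∧ G.Reachable a v) := by
  constructor
  · rintro ⟨p⟩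
    induction p with
    | nil => exact .inl .rfl
    | cons h _ ih =>
      rcases (sup_adj _ _ _ _).1 h with h | h
      · have := h.reachable
        rcases ih with h1 | ⟨h1, h2⟩ | ⟨h1, h2⟩
        · exact .inl (this.trans h1)
        · exact .inr (.inl ⟨this.trans h1, h2⟩)
        · exact .inr (.inr ⟨this.trans h1, h2⟩)
      · obtain ⟨⟨rfl, rfl⟩ | ⟨rfl, rfl⟩, -⟩ := (edge_adj ..).1 h <;> tauto
  · have hle : G ≤ G ⊔ edge a b := le_sup_left
    rintro (h | ⟨h1, h2⟩ | ⟨h1, h2⟩)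
    · exact h.mono hle
    · exact ((h1.mono hle).trans reachable_sup_edge).trans (h2.mono hle)
    · exact ((h1.mono hle).trans reachable_sup_edge.symm).trans (h2.mono hle)

lemma reachable_sup_edge_iff_of_reachable (h : G.Reachable a b) :
    (G ⊔ edge a b).Reachable u v ↔ G.Reachable u v := by
  rw [reachable_sup_edge_iff]
  refine ⟨?_, .inl⟩
  rintro (huv | ⟨hua, hbv⟩ | ⟨hub, hav⟩)
  exacts [huv, (hua.trans h).trans hbv, (hub.trans h.symm).trans hav]

lemma card_connectedComponent_sup_edge [Finite V] (h : ¬ G.Reachable a b) :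
    Nat.card (G ⊔ edge a b).ConnectedComponent + 1 = Nat.card G.ConnectedComponent := by
  set φ := ConnectedComponent.map (Hom.ofLE (le_sup_left : G ≤ G ⊔ edge a b))
  have hφ : Set.BijOn φ (Set.univ \ {G.connectedComponentMk b}) Set.univ := by
    refine ⟨Set.mapsTo_univ _ _, ?_, ?_⟩
    · rintro c ⟨-, hc⟩ d ⟨-, hd⟩ hcd
      induction c using ConnectedComponent.ind
      induction d using ConnectedComponent.ind
      simp only [Set.mem_singleton_iff, ConnectedComponent.eq] at hc hd
      simp only [φ, ConnectedComponent.map_mk, ConnectedComponent.eq, reachable_sup_edge_iff]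
        at hcd ⊢
      rcases hcd with hcd | ⟨-, hd'⟩ | ⟨hc', -⟩
      · exact hcd
      · exact absurd hd'.symm hd
      · exact absurd hc' hc
    · intro c _
      induction c using ConnectedComponent.ind with | h v
      by_cases hv : G.Reachable v b
      · refine ⟨G.connectedComponentMk a, ⟨trivial, fun ha => h (ConnectedComponent.exact ha)⟩, ?_⟩
        simp only [φ, ConnectedComponent.map_mk, ConnectedComponent.eq]
        exact reachable_sup_edge.trans ((hv.mono le_sup_left).symm)
      · exact ⟨G.connectedComponentMk v, ⟨trivial, fun hb => hv (ConnectedComponent.exact hb)⟩, rfl⟩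
  rw [← Set.ncard_univ, ← Set.ncard_univ, ← hφ.ncard_eq,
    Set.ncard_sdiff_singleton_add_one (Set.mem_univ _)]

lemma fromEdgeSet_insert (s : Set (Sym2 V)) :
    fromEdgeSet (insert s(a, b) s) = fromEdgeSet s ⊔ edge a b := by
  rw [Set.insert_eq, Set.union_comm, fromEdgeSet_union]
  rfl

lemma card_connectedComponent_bot [Finite V] :
    Nat.card (⊥ : SimpleGraph V).ConnectedComponent = Nat.card V := by
  refine (Nat.card_congr (Equiv.ofBijective _ ⟨fun u v huv => ?_, Quot.mk_surjective⟩)).symm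
  simpa using ConnectedComponent.exact huv

lemma card_add_card_connectedComponent_of_isAcyclic [Finite V] (s : Finset (Sym2 V))
    (hs : ∀ e ∈ s, ¬ e.IsDiag) (h : (fromEdgeSet (s : Set (Sym2 V))).IsAcyclic) :
    s.card + Nat.card (fromEdgeSet (s : Set (Sym2 V))).ConnectedComponent = Nat.card V := by
  classical
  induction s using Finset.induction_on with
  | empty => simp [card_connectedComponent_bot]
  | @insert e s he ih =>
    induction e with | h a b
    rw [Finset.coe_insert, fromEdgeSet_insert] at h ⊢
    have hab : a ≠ b := by simpa using hs _ (Finset.mem_insert_self _ _)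
    obtain ⟨hacyc, hreach⟩ := isAcyclic_sup_fromEdgeSet_iff.1 h
    have hnreach : ¬ (fromEdgeSet (s : Set (Sym2 V))).Reachable a b := fun hr => by
      simpa [hab, he] using hreach hr
    rw [Finset.card_insert_of_notMem he,
      ← ih (fun e he => hs e (Finset.mem_insert_of_mem he)) hacyc,
      ← card_connectedComponent_sup_edge hnreach]
    ring

end SimpleGraph

open SimpleGraph

lemma IsSpanningForest.card_le {V : Type*} [Finite V] {H : SimpleGraph V} {K F : Finset (Sym2 V)}
    (hF : IsSpanningForest H F) (hK : (K : Set (Sym2 V)) ⊆ H.edgeSet)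
    (hKa : (fromEdgeSet (K : Set (Sym2 V))).IsAcyclic) : K.card ≤ F.card := by
  obtain ⟨hFsub, hFa, hFr⟩ := hF
  have hcK := card_add_card_connectedComponent_of_isAcyclic K
    (fun e he => H.not_isDiag_of_mem_edgeSet (hK he)) hKa
  have hcF := card_add_card_connectedComponent_of_isAcyclic F
    (fun e he => H.not_isDiag_of_mem_edgeSet (hFsub he)) hFa
  have hcompK : Nat.card H.ConnectedComponent ≤
      Nat.card (fromEdgeSet (K : Set (Sym2 V))).ConnectedComponent :=
    ConnectedComponent.card_le_card_of_le ((fromEdgeSet_le _).2 (Set.sdiff_subset.trans hK))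
  have hcompF : Nat.card (fromEdgeSet (F : Set (Sym2 V))).ConnectedComponent =
      Nat.card H.ConnectedComponent :=
    Nat.card_congr (Quot.congrRight hFr)
  omega

lemma List.Pairwise.exists_append_forall_le_forall_lt {α β : Type*} [LinearOrder β] {f : α → β}
    {l : List α} (hl : l.Pairwise (f · ≤ f ·)) (b : β) :
    ∃ l₁ l₂, l = l₁ ++ l₂ ∧ (∀ x ∈ l₁, f x ≤ b) ∧ ∀ x ∈ l₂, b < f x := by
  induction l with
  | nil => exact ⟨[], [], rfl, by simp, by simp⟩
  | cons x l ih =>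
    obtain ⟨hx, hl⟩ := List.pairwise_cons.1 hl
    by_cases hxb : f x ≤ b
    · obtain ⟨l₁, l₂, rfl, h₁, h₂⟩ := ih hl
      exact ⟨x :: l₁, l₂, rfl, by simpa [hxb] using h₁, h₂⟩
    · refine ⟨[], x :: l, rfl, by simp, ?_⟩
      simp only [List.mem_cons, forall_eq_or_imp]
      exact ⟨not_le.1 hxb, fun y hy => (not_le.1 hxb).trans_le (hx y hy)⟩

open Finset in
lemma Finset.sum_comp_by_parts {α M : Type*} [AddCommGroup M] (s : Finset α) (b : α → ℕ)
    (g : ℕ → M) {N : ℕ} (hN : ∀ x ∈ s, b x ≤ N) :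
    ∑ x ∈ s, g (b x) = #s • g N - ∑ i ∈ range N, #(s.filter (b · ≤ i)) • (g (i + 1) - g i) := by
  have telescope : ∀ x ∈ s,
      ∑ i ∈ range N, (if b x ≤ i then g (i + 1) - g i else 0) = g N - g (b x) := by
    intro x hx
    rw [← sum_filter, show (range N).filter (b x ≤ ·) = Ico (b x) N by ext; simp; omega,
      sum_Ico_sub _ (hN x hx)]
  calc ∑ x ∈ s, g (b x)
      = ∑ x ∈ s, (g N - ∑ i ∈ range N, if b x ≤ i then g (i + 1) - g i else 0) :=
        sum_congr rfl fun x hx => by rw [telescope x hx, sub_sub_cancel]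
    _ = _ := by
        simp_rw [sum_sub_distrib, sum_const, sum_comm (s := s), ← sum_filter, sum_const]

open Finset in
lemma Finset.sum_comp_le_sum_comp_of_card_filter_le {α M : Type*} [AddCommGroup M] [PartialOrder M]
    [IsOrderedAddMonoid M] {s t : Finset α} (b : α → ℕ) {g : ℕ → M} (hg : Monotone g)
    (hcard : #s = #t) (h : ∀ i, #(t.filter (b · ≤ i)) ≤ #(s.filter (b · ≤ i))) :
    ∑ x ∈ s, g (b x) ≤ ∑ x ∈ t, g (b x) := by
  classical
  have hN : ∀ x ∈ s ∪ t, b x ≤ (s ∪ t).sup b := fun x hx => le_sup hx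
  rw [sum_comp_by_parts s b g fun x hx => hN x (mem_union_left _ hx),
    sum_comp_by_parts t b g fun x hx => hN x (mem_union_right _ hx), hcard]
  exact sub_le_sub_left (sum_le_sum fun i _ =>
    nsmul_le_nsmul_left (sub_nonneg.2 (hg i.le_succ)) (h i)) _

section Greedy
variable {V : Type*}

def edgeSetOfList (l : List (V × V)) : Set (Sym2 V) := {e | ∃ p ∈ l, e = s(p.1, p.2)}

@[simp] lemma edgeSetOfList_nil : edgeSetOfList ([] : List (V × V)) = ∅ := by
  simp [edgeSetOfList]

@[simp] lemma edgeSetOfList_cons (x : V × V) (l : List (V × V)) :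
    edgeSetOfList (x :: l) = insert s(x.1, x.2) (edgeSetOfList l) := by
  ext e; simp [edgeSetOfList, or_and_right, exists_or, eq_comm]

variable [DecidableEq V] {F : Finset (Sym2 V)} {x : V × V} {l : List (V × V)}

lemma greedyForest_cons_of_reachable (h : (fromEdgeSet (F : Set (Sym2 V))).Reachable x.1 x.2) :
    greedyForest F (x :: l) = greedyForest F l := by
  rw [greedyForest, if_pos h]

lemma greedyForest_cons_of_not_reachable
    (h : ¬ (fromEdgeSet (F : Set (Sym2 V))).Reachable x.1 x.2) :
    greedyForest F (x :: l) = greedyForest (insert s(x.1, x.2) F) l := by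
  rw [greedyForest, if_neg h]

lemma greedyForest_append (l₁ l₂ : List (V × V)) (F : Finset (Sym2 V)) :
    greedyForest F (l₁ ++ l₂) = greedyForest (greedyForest F l₁) l₂ := by
  induction l₁ generalizing F with
  | nil => rfl
  | cons x l₁ ih =>
    by_cases h : (fromEdgeSet (F : Set (Sym2 V))).Reachable x.1 x.2
    · rw [List.cons_append, greedyForest_cons_of_reachable h, greedyForest_cons_of_reachable h, ih]
    · rw [List.cons_append, greedyForest_cons_of_not_reachable h,
        greedyForest_cons_of_not_reachable h, ih]

lemma subset_greedyForest : F ⊆ greedyForest F l := by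
  induction l generalizing F with
  | nil => exact subset_rfl
  | cons x l ih =>
    by_cases h : (fromEdgeSet (F : Set (Sym2 V))).Reachable x.1 x.2
    · rw [greedyForest_cons_of_reachable h]; exact ih
    · rw [greedyForest_cons_of_not_reachable h]; exact (Finset.subset_insert _ _).trans ih

lemma coe_greedyForest_subset : (greedyForest F l : Set (Sym2 V)) ⊆ ↑F ∪ edgeSetOfList l := by
  induction l generalizing F with
  | nil => exact Set.subset_union_left
  | cons x l ih =>
    by_cases h : (fromEdgeSet (F : Set (Sym2 V))).Reachable x.1 x.2
    · rw [greedyForest_cons_of_reachable h]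
      exact ih.trans (by simp [Set.union_insert, Set.subset_insert])
    · rw [greedyForest_cons_of_not_reachable h]
      exact ih.trans (by simp [Set.union_insert, Set.insert_union])

lemma isAcyclic_greedyForest (h : (fromEdgeSet (F : Set (Sym2 V))).IsAcyclic) :
    (fromEdgeSet (greedyForest F l : Set (Sym2 V))).IsAcyclic := by
  induction l generalizing F with
  | nil => exact h
  | cons x l ih =>
    by_cases hx : (fromEdgeSet (F : Set (Sym2 V))).Reachable x.1 x.2
    · rw [greedyForest_cons_of_reachable hx]; exact ih h
    · rw [greedyForest_cons_of_not_reachable hx]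
      refine ih ?_
      rw [Finset.coe_insert, fromEdgeSet_insert]
      exact h.sup_edge_of_not_reachable hx

lemma reachable_greedyForest_iff {u v : V} :
    (fromEdgeSet (greedyForest F l : Set (Sym2 V))).Reachable u v ↔
      (fromEdgeSet (↑F ∪ edgeSetOfList l)).Reachable u v := by
  induction l generalizing F with
  | nil => rw [edgeSetOfList_nil, Set.union_empty]; rfl
  | cons x l ih =>
    rw [edgeSetOfList_cons, Set.union_insert, fromEdgeSet_insert]
    by_cases hx : (fromEdgeSet (F : Set (Sym2 V))).Reachable x.1 x.2
    · rw [greedyForest_cons_of_reachable hx, ih, reachable_sup_edge_iff_of_reachable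
        (hx.mono (fromEdgeSet_mono Set.subset_union_left))]
    · rw [greedyForest_cons_of_not_reachable hx, ih, Finset.coe_insert, Set.insert_union,
        fromEdgeSet_insert]

lemma isSpanningForest_greedyForest (hl : ∀ p ∈ l, p.1 ≠ p.2) :
    IsSpanningForest (fromEdgeSet (edgeSetOfList l)) (greedyForest ∅ l) := by
  refine ⟨fun e he => ?_, isAcyclic_greedyForest (by simp), fun u v => ?_⟩
  · obtain ⟨p, hp, rfl⟩ : e ∈ edgeSetOfList l := by simpa using coe_greedyForest_subset he
    exact ⟨⟨p, hp, rfl⟩, by simpa using hl p hp⟩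
  · rw [reachable_greedyForest_iff, Finset.coe_empty, Set.empty_union]

lemma card_filter_le_card_filter_greedyForest [Finite V] (key : Sym2 V → ℕ)
    (hsorted : l.Pairwise fun p q => key s(p.1, p.2) ≤ key s(q.1, q.2))
    (hl : ∀ p ∈ l, p.1 ≠ p.2) {K : Finset (Sym2 V)} (hK : (K : Set (Sym2 V)) ⊆ edgeSetOfList l)
    (hKa : (fromEdgeSet (K : Set (Sym2 V))).IsAcyclic) (i : ℕ) :
    (K.filter (key · ≤ i)).card ≤ ((greedyForest ∅ l).filter (key · ≤ i)).card := by
  obtain ⟨l₁, l₂, rfl, h₁, h₂⟩ := hsorted.exists_append_forall_le_forall_lt i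
  have hfilter : (greedyForest ∅ (l₁ ++ l₂)).filter (key · ≤ i) = greedyForest ∅ l₁ := by
    ext e
    rw [Finset.mem_filter, greedyForest_append]
    refine ⟨fun ⟨he, hi⟩ => ?_, fun he => ⟨subset_greedyForest he, ?_⟩⟩
    · rcases coe_greedyForest_subset he with he | ⟨p, hp, rfl⟩
      · exact he
      · exact absurd (h₂ p hp) (not_lt.2 hi)
    · obtain ⟨p, hp, rfl⟩ : e ∈ edgeSetOfList l₁ := by simpa using coe_greedyForest_subset he
      exact h₁ p hp
  rw [hfilter]
  refine (isSpanningForest_greedyForest fun p hp => hl p (List.mem_append_left _ hp)).card_le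
    (fun e he => ?_) (hKa.anti (fromEdgeSet_mono (Finset.coe_subset.2 (Finset.filter_subset _ _))))
  obtain ⟨he, hi⟩ := Finset.mem_filter.1 he
  obtain ⟨p, hp, rfl⟩ := hK he
  rcases List.mem_append.1 hp with hp | hp
  · exact ⟨⟨p, hp, rfl⟩, by simpa using hl p (List.mem_append_left _ hp)⟩
  · exact absurd (h₂ p hp) (not_lt.2 hi)

end Greedy

lemma sum_comp_greedyForest_le {V M : Type*} [Finite V] [DecidableEq V] [AddCommGroup M]
    [PartialOrder M] [IsOrderedAddMonoid M] {l : List (V × V)} (key : Sym2 V → ℕ)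
    (hsorted : l.Pairwise fun p q => key s(p.1, p.2) ≤ key s(q.1, q.2))
    (hl : ∀ p ∈ l, p.1 ≠ p.2) {g : ℕ → M} (hg : Monotone g) {K : Finset (Sym2 V)}
    (hK : IsSpanningForest (fromEdgeSet (edgeSetOfList l)) K) :
    ∑ e ∈ greedyForest ∅ l, g (key e) ≤ ∑ e ∈ K, g (key e) := by
  have hF := isSpanningForest_greedyForest hl
  have hKl : (K : Set (Sym2 V)) ⊆ edgeSetOfList l := fun e he =>
    (edgeSet_fromEdgeSet (edgeSetOfList l) ▸ hK.1 he).1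
  refine Finset.sum_comp_le_sum_comp_of_card_filter_le key hg
    (le_antisymm (hK.card_le hF.1 hF.2.1) (hF.card_le hK.1 hK.2.1))
    (card_filter_le_card_filter_greedyForest key hsorted hl hKl hK.2.1)

theorem approximate_msf_bucketing_general {V : Type*} [Fintype V] [DecidableEq V]
    (G : SimpleGraph V) (w : Sym2 V → ℝ) (ε Wmin : ℝ)
    (hε : 0 < ε) (hWmin : 0 < Wmin)
    (bucket : Sym2 V → ℕ)
    (hbucket : ∀ e ∈ G.edgeSet,
      Wmin * (1 + ε) ^ (bucket e) ≤ w e ∧ w e < Wmin * (1 + ε) ^ (bucket e + 1))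
    (l : List (V × V))
    (hladj : ∀ p ∈ l, G.Adj p.1 p.2)
    (hlcover : ∀ e ∈ G.edgeSet, ∃ p ∈ l, e = s(p.1, p.2))
    (hsorted : l.Pairwise fun p q => bucket s(p.1, p.2) ≤ bucket s(q.1, q.2)) :
    IsSpanningForest G (greedyForest ∅ l) ∧
    ∀ Fopt : Finset (Sym2 V),
      (IsSpanningForest G Fopt ∧
        ∀ F', IsSpanningForest G F' → ∑ e ∈ Fopt, w e ≤ ∑ e ∈ F', w e) →
      (∑ e ∈ Fopt, w e ≤ ∑ e ∈ greedyForest ∅ l, w e ∧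
        ∑ e ∈ greedyForest ∅ l, w e ≤ (1 + ε) * ∑ e ∈ Fopt, w e) := by
  have hG : fromEdgeSet (edgeSetOfList l) = G := by
    rw [← G.fromEdgeSet_edgeSet]
    exact congrArg _ (Set.ext fun e => ⟨by rintro ⟨p, hp, rfl⟩; exact hladj p hp, hlcover e⟩)
  have hl : ∀ p ∈ l, p.1 ≠ p.2 := fun p hp => (hladj p hp).ne
  have hF : IsSpanningForest G (greedyForest ∅ l) := hG ▸ isSpanningForest_greedyForest hl
  refine ⟨hF, fun Fopt ⟨hFopt, hmin⟩ => ⟨hmin _ hF, ?_⟩⟩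
  -- the rounded weight of bucket `i`
  set g : ℕ → ℝ := fun i => Wmin * (1 + ε) ^ i
  have hg : Monotone g := fun i j hij =>
    mul_le_mul_of_nonneg_left (pow_le_pow_right₀ (by linarith) hij) hWmin.le
  calc ∑ e ∈ greedyForest ∅ l, w e
      ≤ ∑ e ∈ greedyForest ∅ l, (1 + ε) * g (bucket e) := Finset.sum_le_sum fun e he => by
        have := (hbucket e (hF.1 he)).2
        rw [pow_succ] at this
        linarith
    _ = (1 + ε) * ∑ e ∈ greedyForest ∅ l, g (bucket e) := by rw [Finset.mul_sum]
    _ ≤ (1 + ε) * ∑ e ∈ Fopt, g (bucket e) := mul_le_mul_of_nonneg_left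
        (sum_comp_greedyForest_le bucket hsorted hl hg (hG ▸ hFopt)) (by linarith)
    _ ≤ (1 + ε) * ∑ e ∈ Fopt, w e := by
        gcongr with e he
        exact (hbucket e (hFopt.1 he)).1

/-- Approximate minimum spanning forest via bucketing.  Partition the edges of
`G` into buckets `Bᵢ = {e : Wmin(1+ε)^i ≤ w(e) < Wmin(1+ε)^(i+1)}` and process
them greedily in any order sorted by bucket index, rejecting only self-loop
edges.  Then the resulting `F` is a spanning forest of `G` and
`W(F_OPT) ≤ W(F) ≤ (1+ε)·W(F_OPT)` for any minimum spanning forest `F_OPT`. -/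
theorem approximate_msf_bucketing {V : Type*} [Fintype V] [DecidableEq V]
    (G : SimpleGraph V) (w : Sym2 V → ℝ) (ε Wmin : ℝ)
    (hε : 0 < ε) (hWmin : 0 < Wmin)
    (hw : ∀ e ∈ G.edgeSet, Wmin ≤ w e)
    (bucket : Sym2 V → ℕ)
    (hbucket : ∀ e ∈ G.edgeSet,
      Wmin * (1 + ε) ^ (bucket e) ≤ w e ∧ w e < Wmin * (1 + ε) ^ (bucket e + 1))
    (l : List (V × V))
    (hladj : ∀ p ∈ l, G.Adj p.1 p.2)
    (hlcover : ∀ e ∈ G.edgeSet, ∃ p ∈ l, e = s(p.1, p.2))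
    (hsorted : l.Pairwise fun p q => bucket s(p.1, p.2) ≤ bucket s(q.1, q.2)) :
    IsSpanningForest G (greedyForest ∅ l) ∧
    ∀ Fopt : Finset (Sym2 V),
      (IsSpanningForest G Fopt ∧
        ∀ F', IsSpanningForest G F' → ∑ e ∈ Fopt, w e ≤ ∑ e ∈ F', w e) →
      (∑ e ∈ Fopt, w e ≤ ∑ e ∈ greedyForest ∅ l, w e ∧
        ∑ e ∈ greedyForest ∅ l, w e ≤ (1 + ε) * ∑ e ∈ Fopt, w e) :=
  approximate_msf_bucketing_general G w ε Wmin hε hWmin bucket hbucket l hladj hlcover hsorted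
end

section
/- Let G = (V, E) be an undirected graph, and let a sampling phase produce a partial connectivity labeling C with a most-frequent label L_max. Consider a finish phase that processes, for every vertex u with C(u) ≠ L_max, all edges incident to u, applying a correct union operation to each such edge on the forest initialized from C. Then every edge of G with at least one endpoint outside the L_max-tree is processed, every edge with both endpoints in the L_max-tree connects vertices already in the same tree, and consequently the final root function is a correct connectivity labeling of G. -/
theorem SimpleGraph.Reachable.eq_of_forall_adj {V β : Type*} {G : SimpleGraph V} {f : V → β}
    (hf : ∀ u v, G.Adj u v → f u = f v) {u v : V} (h : G.Reachable u v) : f u = f v := by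
  obtain ⟨w⟩ := h
  induction w with
  | nil => rfl
  | cons hadj _ ih => exact (hf _ _ hadj).trans ih

theorem sampled_finish_correct_general {V : Type*} (G : SimpleGraph V)
    (C : V → V) (Lmax : V)
    (R : V → V)
    (hmono : ∀ u v, C u = C v → R u = R v)
    (hpartialR : ∀ u v, R u = R v → G.Reachable u v)
    (hprocessed : ∀ u v, G.Adj u v → (C u ≠ Lmax ∨ C v ≠ Lmax) → R u = R v) :
    (∀ u v, G.Adj u v → C u = Lmax → C v = Lmax → R u = R v) ∧
    (∀ u v, R u = R v ↔ G.Reachable u v) := by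
  have hinside : ∀ u v, C u = Lmax → C v = Lmax → R u = R v :=
    fun u v hu hv => hmono u v (hu.trans hv.symm)
  have hedge : ∀ u v, G.Adj u v → R u = R v := by
    intro u v huv
    by_cases hu : C u = Lmax
    · by_cases hv : C v = Lmax
      · exact hinside u v hu hv
      · exact hprocessed u v huv (Or.inr hv)
    · exact hprocessed u v huv (Or.inl hu)
  exact ⟨fun u v _ => hinside u v,
    fun u v => ⟨hpartialR u v, fun h => h.eq_of_forall_adj hedge⟩⟩

/-- Two-phase execution: a sampling phase produces a height-one partial
connectivity labeling `C` with most-frequent label `Lmax`; a finish phase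
applies correct union operations to all edges incident to vertices labeled
differently from `Lmax`, producing a final root function `R` that only merges
trees of `C` (so `R` is still a partial connectivity labeling) and makes the
endpoints of every processed edge lie in the same tree.  Then every edge with
both endpoints in the `Lmax`-tree already connects vertices in the same tree,
and `R` is a correct connectivity labeling of `G`. -/
theorem sampled_finish_correct {V : Type*} (G : SimpleGraph V)
    (C : V → V) (Lmax : V)
    (hheight : ∀ v, C (C v) = C v)
    (hpartialC : ∀ u v, C u = C v → G.Reachable u v)
    (R : V → V)
    (hmono : ∀ u v, C u = C v → R u = R v)
    (hpartialR : ∀ u v, R u = R v → G.Reachable u v)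
    (hprocessed : ∀ u v, G.Adj u v → (C u ≠ Lmax ∨ C v ≠ Lmax) → R u = R v) :
    (∀ u v, G.Adj u v → C u = Lmax → C v = Lmax → R u = R v) ∧
    (∀ u v, R u = R v ↔ G.Reachable u v) :=
  sampled_finish_correct_general G C Lmax R hmono hpartialR hprocessed
end
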